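/- Let DB be a finite uncertain database whose events take nonnegative values. For any pattern β and item i, expSup^cap_DB(β ++ ⟨{i}⟩) ≤ expSupport^top_DB(β ++ ⟨{i}⟩), i.e., maxPr_DB(β) · Σ_{S ∈ DB} maxPr_S(⟨{i}⟩) ≤ maxPr_DB(β) · maxPr_DB(⟨{i}⟩) · sup_DB(i). (Lemma 2: expSup^cap is a tighter upper bound than uWSequence's expSupport^top.) -/

import Mathlib

open scoped Classical

noncomputable section

variable {I : Type*}

/-- `js` is an occurrence of pattern `α` in uncertain sequence `S`:
a strictly increasing list of 1-based positions `1 ≤ j₁ < ⋯ < jₘ ≤ n`. -/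
def IsOcc (S : List (I → ℝ)) (α : List (Finset I)) (js : List ℕ) : Prop :=
  js.length = α.length ∧ List.Pairwise (· < ·) js ∧ ∀ j ∈ js, 1 ≤ j ∧ j ≤ S.length

/-- The probability of the occurrence `js` of pattern `α` in `S`:
`∏ₖ ∏_{i ∈ eₖ} p_{jₖ}(i)`. -/
def occProb (S : List (I → ℝ)) (α : List (Finset I)) (js : List ℕ) : ℝ :=
  ((α.zip js).map fun ej => ∏ i ∈ ej.1, S.getD (ej.2 - 1) (fun _ => (0 : ℝ)) i).prod

/-- `maxPr_S(α)`: the maximum occurrence probability of `α` in `S`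
(`0` if there is no occurrence, since `sSup ∅ = 0` in `ℝ`; `1` for the empty pattern). -/
def maxPr (S : List (I → ℝ)) (α : List (Finset I)) : ℝ :=
  sSup {x : ℝ | ∃ js, IsOcc S α js ∧ occProb S α js = x}

/-- `α ⊑ α'`: there are positions `j₁ < ⋯ < jₘ` in `α'` with `eₖ ⊆ e'_{jₖ}` for all `k`. -/
def IsSubpattern (α α' : List (Finset I)) : Prop :=
  ∃ β : List (Finset I), List.Forall₂ (· ⊆ ·) α β ∧ β.Sublist α'

/-- Expected support of `α` in a database `DB`. -/
def expSup (DB : List (List (I → ℝ))) (α : List (Finset I)) : ℝ :=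
  (DB.map fun S => maxPr S α).sum

/-- `maxPr_DB(α) = max_{S ∈ DB} maxPr_S(α)`, `0` for an empty database. -/
def maxPrDB (DB : List (List (I → ℝ))) (α : List (Finset I)) : ℝ :=
  (DB.map fun S => maxPr S α).foldr max 0

/-- `expSup^cap_DB(β ++ ⟨{i}⟩) = maxPr_DB(β) · Σ_{S ∈ DB} maxPr_S(⟨{i}⟩)`. -/
def expSupCap (DB : List (List (I → ℝ))) (β : List (Finset I)) (i : I) : ℝ :=
  maxPrDB DB β * expSup DB [{i}]

/-- Support count of item `i`: the number of sequences `S ∈ DB` with `maxPr_S(⟨{i}⟩) > 0`. -/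
def supCount (DB : List (List (I → ℝ))) (i : I) : ℕ :=
  (DB.filter fun S => decide (0 < maxPr S [({i} : Finset I)])).length

/-- The set of items occurring in a pattern. -/
def pItems (α : List (Finset I)) : Finset I :=
  α.foldr (· ∪ ·) ∅

/-- The size of a pattern: total number of items counted across events. -/
def pSize (α : List (Finset I)) : ℕ :=
  (α.map Finset.card).sum

/-- `sWeight(α)`: the sum of the weights of all items of `α` divided by its size. -/
def sWeight (w : I → ℝ) (α : List (Finset I)) : ℝ :=
  (α.map fun e => ∑ i ∈ e, w i).sum / (pSize α : ℝ)

/-- `wgt^cap_F(α)`: the maximum of `w` over `F ∪ items(α)`. -/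
def wgtCap (w : I → ℝ) (F : Finset I) (α : List (Finset I)) : ℝ :=
  (F ∪ pItems α).fold max 0 w

/-- Weighted expected support: `WES_DB(α) = expSup_DB(α) · sWeight(α)`. -/
def WES (DB : List (List (I → ℝ))) (w : I → ℝ) (α : List (Finset I)) : ℝ :=
  expSup DB α * sWeight w α

/-- The SupCalc array `g_{S,α}(m)`: for nonempty `α`, the maximum probability of an
occurrence of `α` in `S` whose last position is `m` (`0` if none, in particular for `m = 0`);
for the empty pattern it is `1`. -/
def gArr (S : List (I → ℝ)) (α : List (Finset I)) (m : ℕ) : ℝ :=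
  if α = [] then 1
  else sSup {x : ℝ | ∃ js, IsOcc S α js ∧ js.getLast? = some m ∧ occProb S α js = x}

lemma getD_nonneg' (S : List (I → ℝ)) (hS : ∀ p ∈ S, ∀ i : I, 0 ≤ p i) (n : ℕ) (i : I) :
    0 ≤ S.getD n (fun _ => (0 : ℝ)) i := by
  rcases lt_or_ge n S.length with h | h
  · rw [List.getD_eq_getElem _ _ h]
    exact hS _ (List.getElem_mem h) i
  · rw [List.getD_eq_default _ _ h]

lemma occProb_nonneg (S : List (I → ℝ)) (hS : ∀ p ∈ S, ∀ i : I, 0 ≤ p i)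
    (α : List (Finset I)) (js : List ℕ) : 0 ≤ occProb S α js := by
  apply List.prod_nonneg
  intro x hx
  obtain ⟨ej, _, rfl⟩ := List.mem_map.mp hx
  exact Finset.prod_nonneg fun i _ => getD_nonneg' S hS _ i

lemma bddAbove_occ_single (S : List (I → ℝ)) (i : I) :
    BddAbove {x : ℝ | ∃ js, IsOcc S [({i} : Finset I)] js ∧ occProb S [{i}] js = x} := by
  apply Set.Finite.bddAbove
  apply Set.Finite.subset
    (Set.Finite.image (fun j => occProb S [({i} : Finset I)] [j]) (Set.finite_Icc 1 S.length))
  rintro x ⟨js, ⟨hlen, _, hmem⟩, rfl⟩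
  obtain ⟨j, rfl⟩ := List.length_eq_one_iff.mp (by simpa using hlen)
  exact ⟨j, ⟨(hmem j (by simp)).1, (hmem j (by simp)).2⟩, rfl⟩

lemma maxPr_single_nonneg (S : List (I → ℝ)) (hS : ∀ p ∈ S, ∀ i : I, 0 ≤ p i) (i : I) :
    0 ≤ maxPr S [({i} : Finset I)] := by
  rcases Set.eq_empty_or_nonempty
      {x : ℝ | ∃ js, IsOcc S [({i} : Finset I)] js ∧ occProb S [{i}] js = x} with h | h
  · rw [maxPr, h, Real.sSup_empty]
  · obtain ⟨x, js, hjs, rfl⟩ := h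
    exact le_trans (occProb_nonneg S hS _ js)
      (le_csSup (bddAbove_occ_single S i) ⟨js, hjs, rfl⟩)

lemma le_foldr_max {a : ℝ} : ∀ l : List ℝ, a ∈ l → a ≤ l.foldr max 0
  | b :: t, h => by
    rcases List.mem_cons.mp h with rfl | h
    · exact le_max_left _ _
    · exact le_trans (le_foldr_max t h) (le_max_right _ _)

lemma foldr_max_nonneg : ∀ l : List ℝ, 0 ≤ l.foldr max 0
  | [] => le_refl 0
  | _ :: t => le_trans (foldr_max_nonneg t) (le_max_right _ _)

lemma sum_le_mul_count (M : ℝ) :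
    ∀ l : List ℝ, (∀ x ∈ l, 0 ≤ x ∧ x ≤ M) →
      l.sum ≤ M * ((l.filter fun x => decide (0 < x)).length : ℝ)
  | [], _ => by simp
  | a :: t, h => by
    have ht := sum_le_mul_count M t fun x hx => h x (List.mem_cons_of_mem _ hx)
    have ha := h a List.mem_cons_self
    by_cases hpos : 0 < a
    · rw [List.sum_cons, List.filter_cons_of_pos (by simpa using hpos),
        List.length_cons]
      push_cast
      calc a + t.sum ≤ M + M * ((t.filter fun x => decide (0 < x)).length : ℝ) :=
            add_le_add ha.2 ht
        _ = M * (((t.filter fun x => decide (0 < x)).length : ℝ) + 1) := by ring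
    · have : a = 0 := le_antisymm (not_lt.mp hpos) ha.1
      rw [List.sum_cons, this, zero_add,
        List.filter_cons_of_neg (by simpa using hpos)]
      exact ht

/-- Lemma 2: `expSup^cap` is a tighter upper bound than
uWSequence's `expSupport^top`. -/
theorem expSupCap_le_expSupportTop
    (DB : List (List (I → ℝ)))
    (hDB : ∀ S ∈ DB, ∀ p ∈ S, ∀ i : I, 0 ≤ p i)
    (β : List (Finset I)) (i : I) :
    maxPrDB DB β * expSup DB [{i}] ≤
      maxPrDB DB β * (maxPrDB DB [{i}] * (supCount DB i : ℝ)) := by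
  apply mul_le_mul_of_nonneg_left _ (foldr_max_nonneg _)
  have hsup : (supCount DB i : ℝ) =
      (((DB.map fun S => maxPr S [({i} : Finset I)]).filter
        fun x => decide (0 < x)).length : ℝ) := by
    rw [supCount, List.filter_map, List.length_map]
    rfl
  rw [expSup, maxPrDB, hsup]
  apply sum_le_mul_count
  intro x hx
  obtain ⟨S, hS, rfl⟩ := List.mem_map.mp hx
  exact ⟨maxPr_single_nonneg S (hDB S hS) i,
    le_foldr_max _ (List.mem_map.mpr ⟨S, hS, rfl⟩)⟩
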